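/- arXiv:2206.13139 — 6 statements merged into one kernel-verified Lean document; each statement's English description precedes it below -/
import Mathlib

section
/- Every vertex x of the fractional stable-set polytope FSTAB(G) = { x ∈ R_+^{V} : x_v + x_w ≤ 1 for all edges (v,w) } satisfies x_v ∈ {0, 1/2, 1} for every vertex v of G. -/
/-!
If `x ∈ FSTAB G` is not half-integral, move every coordinate `x v ∉ {0, 1/2, 1}` by `t` in the
direction `d v = sign (x v - 1/2)`. For small `t` both `x + t • d` and `x - t • d` stay in
`FSTAB G`: moved coordinates are positive, edges with slack keep it, and on a tight edge
`x u + x v = 1` the two coordinates are mirror images under `a ↦ 1 - a`, so they move in opposite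
directions and the sum stays `1`. Then `x` is the midpoint of two distinct points of the polytope.
-/

/-- The fractional stable-set polytope of a graph: nonnegative real vectors indexed by the
vertices with `x v + x w ≤ 1` on every edge. -/
def FSTAB {V : Type*} (G : SimpleGraph V) : Set (V → ℝ) :=
  {x | (∀ v, 0 ≤ x v) ∧ ∀ v w, G.Adj v w → x v + x w ≤ 1}

open Filter Topology

theorem eq_zero_of_mem_extremePoints_of_eventually_add_smul_mem {E : Type*} [AddCommGroup E]
    [Module ℝ E] {S : Set E} {x d : E} (hx : x ∈ S.extremePoints ℝ)
    (hd : ∀ᶠ t in 𝓝 (0 : ℝ), x + t • d ∈ S) : d = 0 := by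
  obtain ⟨ε, hε, hball⟩ := Metric.eventually_nhds_iff.1 hd
  have hmem : ∀ t : ℝ, |t| < ε → x + t • d ∈ S := fun t ht => hball (by simpa using ht)
  have hmid : x ∈ openSegment ℝ (x + (ε / 2) • d) (x + (-(ε / 2)) • d) :=
    ⟨1 / 2, 1 / 2, by norm_num, by norm_num, by norm_num, by module⟩
  have hleft := (mem_extremePoints.1 hx).2 _ (hmem _ (by rw [abs_of_pos (by positivity)]; linarith))
    _ (hmem _ (by rw [abs_neg, abs_of_pos (by positivity)]; linarith)) hmid |>.1
  simpa [hε.ne'] using hleft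

theorem eventually_add_smul_mem_FSTAB {V : Type*} [Finite V] {G : SimpleGraph V} {x d : V → ℝ}
    (hx : x ∈ FSTAB G) (hzero : ∀ v, x v = 0 → d v = 0)
    (htight : ∀ u v, G.Adj u v → x u + x v = 1 → d u + d v = 0) :
    ∀ᶠ t in 𝓝 (0 : ℝ), x + t • d ∈ FSTAB G := by
  simp only [FSTAB, Set.mem_ofPred_eq, Pi.add_apply, Pi.smul_apply, smul_eq_mul]
  refine (eventually_all.2 fun v => ?_).and
    (eventually_all.2 fun u => eventually_all.2 fun v => ?_)
  · rcases (hx.1 v).eq_or_lt with hv | hv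
    · simp [← hv, hzero v hv.symm]
    · have : ContinuousAt (fun t : ℝ => x v + t * d v) 0 := by fun_prop
      exact (continuousAt_const.eventually_lt this (by simpa using hv)).mono fun t ht => ht.le
  · refine eventually_imp_distrib_left.2 fun huv => ?_
    rcases (hx.2 u v huv).eq_or_lt with htight' | hslack
    · refine Eventually.of_forall fun t => le_of_eq ?_
      linear_combination htight' + t * htight u v huv htight'
    · have : ContinuousAt (fun t : ℝ => x u + t * d u + (x v + t * d v)) 0 := by fun_prop
      exact (this.eventually_lt continuousAt_const (by simpa using hslack)).mono fun t ht => ht.le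

noncomputable def roundingDirection (a : ℝ) : ℝ :=
  if a = 0 ∨ a = 1 then 0 else Real.sign (a - 1 / 2)

theorem roundingDirection_one_sub (a : ℝ) : roundingDirection (1 - a) = -roundingDirection a := by
  unfold roundingDirection
  have hends : (1 - a = 0 ∨ 1 - a = 1) ↔ (a = 0 ∨ a = 1) := by grind
  simp only [hends, show 1 - a - 1 / 2 = -(a - 1 / 2) by ring, Real.sign_neg]
  split_ifs <;> simp

theorem roundingDirection_eq_zero_iff {a : ℝ} :
    roundingDirection a = 0 ↔ a = 0 ∨ a = 1 / 2 ∨ a = 1 := by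
  unfold roundingDirection
  rw [ite_eq_left_iff, Real.sign_eq_zero_iff, sub_eq_zero]
  tauto

/-- Balinski–Nemhauser–Trotter: every extreme point of `FSTAB(G)` is half-integral, i.e.,
takes values in `{0, 1/2, 1}` at every vertex. -/
theorem fstab_extremePoint_half_integral
    {V : Type*} [Fintype V] (G : SimpleGraph V) (x : V → ℝ)
    (hx : x ∈ Set.extremePoints ℝ (FSTAB G)) :
    ∀ v, x v = 0 ∨ x v = 1/2 ∨ x v = 1 := by
  have hdir : (fun v => roundingDirection (x v)) = 0 := by
    refine eq_zero_of_mem_extremePoints_of_eventually_add_smul_mem hx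
      (eventually_add_smul_mem_FSTAB hx.1 (fun v hv => ?_) fun u v _ htight => ?_)
    · exact roundingDirection_eq_zero_iff.2 (Or.inl hv)
    · rw [eq_sub_of_add_eq' htight, roundingDirection_one_sub, add_neg_cancel]
  exact fun v => roundingDirection_eq_zero_iff.1 (congrFun hdir v)
end

section
/- Let G be a {0,1}-colorable graph with distinguished non-adjacent vertices u, v such that every [0,1]-valued assignment f on V with f(x)+f(y) ≤ 1 for all edges (x,y) and the completeness condition (for every maximum clique c there exist two vertices whose values sum to 1, the rest being 0) being convex combinations of extreme points with values in {0,1/2,1}, satisfies f(u)+f(v) < 2. Then for any binary-consistent box the sum of probabilities assigned to u and v is at most 3/2. -/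
/-- For an extended 01-gadget with distinguished non-adjacent vertices `u, v`: if the
extreme binary-consistent assignments `E` take values in `{0, 1/2, 1}`, respect
edge-exclusivity, and satisfy `g u + g v < 2`, then every binary-consistent box
(an element of the convex hull of `E`) assigns `u` and `v` probabilities summing
to at most `3/2`. -/
theorem binary_consistent_box_distinguished_sum_le
    {V : Type*} [Fintype V] (G : SimpleGraph V) (u v : V)
    (hne : u ≠ v) (huv : ¬ G.Adj u v)
    (E : Set (V → ℝ))
    (hvals : ∀ g ∈ E, ∀ x, g x = 0 ∨ g x = 1/2 ∨ g x = 1)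
    (hedge : ∀ g ∈ E, ∀ x y, G.Adj x y → g x + g y ≤ 1)
    (hgad : ∀ g ∈ E, g u + g v < 2) :
    ∀ f ∈ convexHull ℝ E, f u + f v ≤ 3/2 := by
  intro f hf
  have hlin : IsLinearMap ℝ (fun f : V → ℝ => f u + f v) := by
    constructor
    · intro a b; simp [Pi.add_apply]; ring
    · intro c a; simp [Pi.smul_apply, smul_eq_mul]; ring
  have hconv : Convex ℝ {f : V → ℝ | f u + f v ≤ 3/2} :=
    convex_halfSpace_le hlin _
  have hsub : E ⊆ {f : V → ℝ | f u + f v ≤ 3/2} := by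
    intro g hg
    have h1 := hvals g hg u
    have h2 := hvals g hg v
    have h3 := hgad g hg
    simp only [Set.mem_setOf_eq]
    rcases h1 with h | h | h <;> rcases h2 with h' | h' | h' <;>
      rw [h, h'] at h3 ⊢ <;> linarith
  exact convexHull_min hsub hconv hf
end

section
/- For real vectors u1 = (1,0,0), u2 = (0, cos θ1, sin θ1), u3 = (0, cos θ2, sin θ2), u13 proportional to (x,1,0), and the derived vectors u7 = (-x, -cos(θ1-θ2) sin θ1 sin θ2, cos(θ1-θ2) sin θ1 cos θ2) and u8 = (x, cos(θ2-θ3) sin θ2 sin θ3, -cos(θ2-θ3) cos θ2 sin θ3), the orthogonality constraint ⟨u7|u8⟩ = 0 is equivalent to x² = -cos(θ1-θ2) cos(θ3-θ2) sin θ1 sin θ3, and the maximum of x²/(1+x²) subject to this constraint over θ1, θ2, θ3 equals 1/5, attained at θ1 = -θ3 = π/4, θ2 = 0. -/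
open Real

lemma product_identity (θ₁ θ₂ : ℝ) :
    cos (θ₁ - θ₂) * sin θ₁ = (sin (θ₁ + (θ₁ - θ₂)) + sin θ₂) / 2 := by
  rw [sin_add, sin_sub, cos_sub]
  linear_combination (sin θ₂ / 2) * sin_sq_add_cos_sq θ₁

lemma xsq_bound {x θ₁ θ₂ θ₃ : ℝ}
    (h : x ^ 2 = -(cos (θ₁ - θ₂) * cos (θ₃ - θ₂) * sin θ₁ * sin θ₃)) :
    x ^ 2 ≤ 1 / 4 := by
  have h1 := product_identity θ₁ θ₂
  have h2 := product_identity θ₃ θ₂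
  set u := sin (θ₁ + (θ₁ - θ₂))
  set v := sin (θ₃ + (θ₃ - θ₂))
  set s := sin θ₂
  have hu1 : u ≤ 1 := sin_le_one _
  have hu2 : -1 ≤ u := neg_one_le_sin _
  have hv1 : v ≤ 1 := sin_le_one _
  have hv2 : -1 ≤ v := neg_one_le_sin _
  have hs1 : s ≤ 1 := sin_le_one _
  have hs2 : -1 ≤ s := neg_one_le_sin _
  have key : x ^ 2 = -((u + s) / 2 * ((v + s) / 2)) := by
    rw [h]
    have : cos (θ₁ - θ₂) * cos (θ₃ - θ₂) * sin θ₁ * sin θ₃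
        = (cos (θ₁ - θ₂) * sin θ₁) * (cos (θ₃ - θ₂) * sin θ₃) := by ring
    rw [this, h1, h2]
  nlinarith [mul_nonneg (mul_nonneg (by linarith : (0:ℝ) ≤ 1 + s) (by linarith : (0:ℝ) ≤ 1 + u)) (by linarith : (0:ℝ) ≤ 1 + v),
    mul_nonneg (mul_nonneg (by linarith : (0:ℝ) ≤ 1 - s) (by linarith : (0:ℝ) ≤ 1 - u)) (by linarith : (0:ℝ) ≤ 1 - v), sq_nonneg s, sq_nonneg x]

/-- For the vectors `u₇ = (-x, -cos(θ₁-θ₂) sin θ₁ sin θ₂, cos(θ₁-θ₂) sin θ₁ cos θ₂)` and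
`u₈ = (x, cos(θ₂-θ₃) sin θ₂ sin θ₃, -cos(θ₂-θ₃) cos θ₂ sin θ₃)`, the orthogonality
`⟨u₇|u₈⟩ = 0` is equivalent to `x² = -cos(θ₁-θ₂) cos(θ₃-θ₂) sin θ₁ sin θ₃`, and the maximum
of `x²/(1+x²)` subject to this constraint is `1/5`, attained at `θ₁ = -θ₃ = π/4, θ₂ = 0`. -/
theorem max_overlap_dimension_five_gadget :
    (∀ x θ₁ θ₂ θ₃ : ℝ,
      ((-x) * x
        + (-(cos (θ₁ - θ₂) * sin θ₁ * sin θ₂)) * (cos (θ₂ - θ₃) * sin θ₂ * sin θ₃)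
        + (cos (θ₁ - θ₂) * sin θ₁ * cos θ₂) * (-(cos (θ₂ - θ₃) * cos θ₂ * sin θ₃)) = 0
       ↔ x ^ 2 = -(cos (θ₁ - θ₂) * cos (θ₃ - θ₂) * sin θ₁ * sin θ₃))) ∧
    IsGreatest {r : ℝ | ∃ x θ₁ θ₂ θ₃ : ℝ,
        x ^ 2 = -(cos (θ₁ - θ₂) * cos (θ₃ - θ₂) * sin θ₁ * sin θ₃) ∧
        r = x ^ 2 / (1 + x ^ 2)} (1/5) ∧
    (∃ x : ℝ,
      x ^ 2 = -(cos (π/4 - 0) * cos (-(π/4) - 0) * sin (π/4) * sin (-(π/4))) ∧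
      x ^ 2 / (1 + x ^ 2) = 1/5) := by
  have hwitness : ((1:ℝ)/2) ^ 2
      = -(cos (π/4 - 0) * cos (-(π/4) - 0) * sin (π/4) * sin (-(π/4))) ∧
      ((1:ℝ)/2) ^ 2 / (1 + ((1:ℝ)/2) ^ 2) = 1/5 := by
    constructor
    · rw [show (π/4 - 0 : ℝ) = π/4 by ring, show (-(π/4) - 0 : ℝ) = -(π/4) by ring,
        cos_neg, sin_neg, cos_pi_div_four, sin_pi_div_four]
      have h2 : Real.sqrt 2 ^ 2 = 2 := Real.sq_sqrt (by norm_num)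
      nlinarith
    · norm_num
  refine ⟨?_, ⟨⟨1/2, π/4, 0, -(π/4), hwitness.1, hwitness.2.symm⟩, ?_⟩,
    ⟨1/2, hwitness.1, hwitness.2⟩⟩
  · intro x θ₁ θ₂ θ₃
    have hc : cos (θ₂ - θ₃) = cos (θ₃ - θ₂) := by rw [cos_sub, cos_sub]; ring
    have hp := sin_sq_add_cos_sq θ₂
    rw [hc]
    constructor <;> intro h <;> nlinarith [h, hp]
  · rintro r ⟨x, θ₁, θ₂, θ₃, hx, rfl⟩
    have hb := xsq_bound hx
    have hpos : (0:ℝ) < 1 + x ^ 2 := by positivity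
    rw [div_le_div_iff₀ hpos (by norm_num)]
    nlinarith
end

section
/- The maximum of the function F(θ1, θ2, θ3) = -cos(θ1 - θ2) cos(θ2 - θ3) sin θ1 sin θ3 over real θ1, θ2, θ3 equals 1/4, attained at θ1 = π/4, θ2 = 0, θ3 = -π/4. -/
open Real

lemma val_pi_four :
    -(cos (π/4 - 0) * cos (0 - (-(π/4))) * sin (π/4) * sin (-(π/4))) = 1/4 := by
  have h2 : (Real.sqrt 2)^2 = 2 := Real.sq_sqrt (by norm_num)
  simp [Real.cos_pi_div_four, Real.sin_pi_div_four, Real.sin_neg]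
  nlinarith [h2]

/-- The maximum of `F(θ₁,θ₂,θ₃) = -cos(θ₁-θ₂) cos(θ₂-θ₃) sin θ₁ sin θ₃` over the reals
equals `1/4`, attained at `θ₁ = π/4, θ₂ = 0, θ₃ = -π/4`. -/
theorem max_trig_product :
    IsGreatest {r : ℝ | ∃ θ₁ θ₂ θ₃ : ℝ,
        r = -(cos (θ₁ - θ₂) * cos (θ₂ - θ₃) * sin θ₁ * sin θ₃)} (1/4) ∧
    -(cos (π/4 - 0) * cos (0 - (-(π/4))) * sin (π/4) * sin (-(π/4))) = 1/4 := by
  refine ⟨⟨⟨π/4, 0, -(π/4), (val_pi_four).symm⟩, ?_⟩, val_pi_four⟩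
  rintro r ⟨θ₁, θ₂, θ₃, rfl⟩
  have key : ∀ x y : ℝ, cos x * sin y = (sin (y + x) + sin (y - x))/2 := by
    intro x y; rw [Real.sin_add, Real.sin_sub]; ring
  set u := sin (2*θ₁ - θ₂) with hu
  set v := sin θ₂ with hv
  set w := sin (θ₂ - 2*θ₃) with hw
  have h1 : cos (θ₁ - θ₂) * sin θ₁ = (u + v)/2 := by
    rw [key]; congr 2
    · congr 1; ring
    · congr 1; ring
  have h2 : cos (θ₂ - θ₃) * sin θ₃ = (v - w)/2 := by
    rw [key]
    have e1 : θ₃ + (θ₂ - θ₃) = θ₂ := by ring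
    have e2 : θ₃ - (θ₂ - θ₃) = -(θ₂ - 2*θ₃) := by ring
    rw [e1, e2, Real.sin_neg]; ring
  have hF : -(cos (θ₁ - θ₂) * cos (θ₂ - θ₃) * sin θ₁ * sin θ₃)
      = (u + v) * (w - v) / 4 := by
    have : cos (θ₁ - θ₂) * cos (θ₂ - θ₃) * sin θ₁ * sin θ₃
        = (cos (θ₁ - θ₂) * sin θ₁) * (cos (θ₂ - θ₃) * sin θ₃) := by ring
    rw [this, h1, h2]; ring
  rw [hF]
  nlinarith [sq_nonneg (u - w + 2*v), Real.sin_le_one (2*θ₁ - θ₂),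
    Real.neg_one_le_sin (2*θ₁ - θ₂), Real.sin_le_one (θ₂ - 2*θ₃),
    Real.neg_one_le_sin (θ₂ - 2*θ₃)]
end

section
/- Let d be odd, n = ⌈log₂((d-1)/2)⌉, r ≥ 4 even, q = √(2/d), p = √(1 - q²(d-1)/2). Define r·2ⁿ unit vectors in R^d indexed by (i,j) with i ∈ [2ⁿ], j ∈ [r]: the vector has first (d-1)/2 entries s_{i,k}·q·cos(2πj/r), next (d-1)/2 entries s_{i,k}·q·sin(2πj/r), and last entry (-1)^j·p, where the signs s_{i,k} ∈ {±1} are the entries of column i of a matrix H' consisting of (d-1)/2 distinct rows of a 2ⁿ×2ⁿ Hadamard matrix. Then the sum of rank-one projectors onto these vectors equals (r·2ⁿ/d)·I_d. -/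
/-!
Coordinate `a` of the vector indexed by `(i, j)` factors as `s_a(i) * w_β(j)`: a sign taken from
a row of `H'` (or `1` for the last coordinate) times one of the three waves `q cos θ_j`,
`q sin θ_j`, `p (-1)^j`, where `β` is the block (cosine, sine or last) containing `a`. Each entry
of the frame operator is therefore `(∑_i s_a s_b) * (∑_j w_β w_γ)`. Over a full period the waves
are orthogonal with squared norm `r/d`, because `∑_j ζ^(2j) = ∑_j (-ζ)^j = 0` for
`ζ = exp(2πi/r)` when `r ≥ 3` is even; within one block the sign rows are orthogonal with
squared norm `2ⁿ`, and `s_a² = 1` reduces the unit norms to `m q² + p² = 1` with `d = 2m + 1`.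
-/

open Real Finset

theorem sum_Icc_pow_eq_zero {K : Type*} [DivisionRing K] {z : K} {r : ℕ} (hz : z ≠ 1)
    (hzr : z ^ r = 1) : ∑ j ∈ Icc 1 r, z ^ j = 0 := by
  have h : Icc 1 r = Ico (0 + 1) (r + 1) := by ext; simp
  rw [h, ← Finset.sum_Ico_add', ← range_eq_Ico]
  simp only [pow_succ, ← Finset.sum_mul, geom_sum_eq hz, hzr, sub_self, zero_div, zero_mul]

section RootOfUnitySums

variable {r : ℕ}

section

open Complex

theorem cexp_two_pi_I_div_pow (j : ℕ) :
    cexp (2 * π * I / r) ^ j = cexp (↑(2 * π * j / r) * I) := by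
  rw [← Complex.exp_nat_mul]
  push_cast
  ring_nf

theorem sum_cexp_two_mul_angle_eq_zero (hr : 3 ≤ r) :
    ∑ j ∈ Icc 1 r, cexp (↑(2 * (2 * π * j / r)) * I) = 0 := by
  have hζ := Complex.isPrimitiveRoot_exp r (by omega)
  have hζ2 : (cexp (2 * π * I / r) ^ 2) ^ r = 1 := by
    rw [pow_right_comm, hζ.pow_eq_one, one_pow]
  convert sum_Icc_pow_eq_zero (hζ.pow_ne_one_of_pos_of_lt two_ne_zero (by omega)) hζ2
    using 2 with j
  rw [← pow_mul, cexp_two_pi_I_div_pow]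
  push_cast
  ring_nf

theorem sum_neg_one_pow_mul_cexp_eq_zero (hr : 3 ≤ r) (he : Even r) :
    ∑ j ∈ Icc 1 r, (↑((-1 : ℝ) ^ j) : ℂ) * cexp (↑(2 * π * j / r) * I) = 0 := by
  have hζ := Complex.isPrimitiveRoot_exp r (by omega)
  have hne : -cexp (2 * π * I / r) ≠ 1 := fun h =>
    hζ.pow_ne_one_of_pos_of_lt two_ne_zero (by omega) (by rw [← neg_sq, h, one_pow])
  convert sum_Icc_pow_eq_zero hne (by rw [he.neg_pow, hζ.pow_eq_one]) using 2 with j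
  rw [neg_pow (cexp _), cexp_two_pi_I_div_pow]
  push_cast
  ring

end

theorem sum_cos_sq_eq (hr : 3 ≤ r) : ∑ j ∈ Icc 1 r, cos (2 * π * j / r) ^ 2 = r / 2 := by
  have h := congrArg Complex.re (sum_cexp_two_mul_angle_eq_zero hr)
  simp only [Complex.re_sum, Complex.exp_ofReal_mul_I_re, Complex.zero_re] at h
  simp only [cos_sq, sum_add_distrib, ← sum_div, h, sum_const, Nat.card_Icc, add_tsub_cancel_right,
    nsmul_eq_mul]
  ring

theorem sum_sin_sq_eq (hr : 3 ≤ r) : ∑ j ∈ Icc 1 r, sin (2 * π * j / r) ^ 2 = r / 2 := by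
  simp only [sin_sq, sum_sub_distrib, sum_const, Nat.card_Icc, add_tsub_cancel_right, nsmul_eq_mul,
    mul_one, sum_cos_sq_eq hr]
  ring

theorem sum_cos_mul_sin_eq_zero (hr : 3 ≤ r) :
    ∑ j ∈ Icc 1 r, cos (2 * π * j / r) * sin (2 * π * j / r) = 0 := by
  have h := congrArg Complex.im (sum_cexp_two_mul_angle_eq_zero hr)
  have hsin : ∀ x, sin (2 * x) = 2 * (cos x * sin x) := fun x => by rw [sin_two_mul]; ring
  simp only [Complex.im_sum, Complex.exp_ofReal_mul_I_im, Complex.zero_im, hsin, ← mul_sum] at h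
  linarith

theorem sum_neg_one_pow_mul_cos_eq_zero (hr : 3 ≤ r) (he : Even r) :
    ∑ j ∈ Icc 1 r, (-1 : ℝ) ^ j * cos (2 * π * j / r) = 0 := by
  have h := congrArg Complex.re (sum_neg_one_pow_mul_cexp_eq_zero hr he)
  simpa only [Complex.re_sum, Complex.re_ofReal_mul, Complex.exp_ofReal_mul_I_re,
    Complex.zero_re] using h

theorem sum_neg_one_pow_mul_sin_eq_zero (hr : 3 ≤ r) (he : Even r) :
    ∑ j ∈ Icc 1 r, (-1 : ℝ) ^ j * sin (2 * π * j / r) = 0 := by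
  have h := congrArg Complex.im (sum_neg_one_pow_mul_cexp_eq_zero hr he)
  simpa only [Complex.im_sum, Complex.im_ofReal_mul, Complex.exp_ofReal_mul_I_im,
    Complex.zero_im] using h

end RootOfUnitySums

section Coordinates

variable {m : ℕ} {H : ℕ → ℕ → ℝ} {q p c : ℝ} {r : ℕ}

def coordBlock (m a : ℕ) : Fin 3 :=
  if a < m then 0 else if a < 2 * m then 1 else 2

def coordSign (H : ℕ → ℕ → ℝ) (m a i : ℕ) : ℝ :=
  if a < m then H a i else if a < 2 * m then H (a - m) i else 1

noncomputable def blockWave (q p : ℝ) (r : ℕ) : Fin 3 → ℕ → ℝ :=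
  ![fun j => q * cos (2 * π * j / r), fun j => q * sin (2 * π * j / r), fun j => p * (-1) ^ j]

theorem sum_range_coordBlock (f : Fin 3 → ℝ) :
    ∑ a ∈ range (2 * m + 1), f (coordBlock m a) = m * f 0 + m * f 1 + f 2 := by
  rw [sum_range_succ, ← sum_range_add_sum_Ico _ (by omega : m ≤ 2 * m)]
  have h0 : ∀ a ∈ range m, f (coordBlock m a) = f 0 := fun a ha => by
    simp [coordBlock, mem_range.mp ha]
  have h1 : ∀ a ∈ Ico m (2 * m), f (coordBlock m a) = f 1 := fun a ha => by
    obtain ⟨ha1, ha2⟩ := mem_Ico.mp ha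
    simp [coordBlock, ha2, not_lt.mpr ha1]
  rw [sum_congr rfl h0, sum_congr rfl h1]
  simp [coordBlock, two_mul]

theorem sq_coordSign {N : ℕ} (hH : ∀ k < m, ∀ i < N, H k i = 1 ∨ H k i = -1)
    (a : ℕ) {i : ℕ} (hi : i < N) : coordSign H m a i ^ 2 = 1 := by
  have h : ∀ k < m, H k i ^ 2 = 1 := fun k hk => sq_eq_one_iff.mpr (hH k hk i hi)
  unfold coordSign
  split_ifs with h₁ h₂
  exacts [h a h₁, h _ (by omega), one_pow 2]

theorem sum_coordSign_mul_of_coordBlock_eq {N : ℕ}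
    (hH₁ : ∀ k < m, ∀ i < N, H k i = 1 ∨ H k i = -1)
    (hH₂ : ∀ k < m, ∀ k' < m, k ≠ k' → ∑ i ∈ range N, H k i * H k' i = 0)
    {a b : ℕ} (ha : a < 2 * m + 1) (hb : b < 2 * m + 1) (hab : coordBlock m a = coordBlock m b) :
    ∑ i ∈ range N, coordSign H m a i * coordSign H m b i = if a = b then (N : ℝ) else 0 := by
  split_ifs with h
  · subst h
    rw [sum_congr rfl fun i hi => by rw [← sq, sq_coordSign hH₁ a (mem_range.mp hi)]]
    simp
  · obtain ⟨ha', hb'⟩ | ⟨ha₁, ha₂, hb₁, hb₂⟩ :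
        (a < m ∧ b < m) ∨ (m ≤ a ∧ a < 2 * m ∧ m ≤ b ∧ b < 2 * m) := by
      unfold coordBlock at hab
      split_ifs at hab <;> omega
    · simp only [coordSign, if_pos ha', if_pos hb']
      exact hH₂ a ha' b hb' h
    · simp only [coordSign, if_neg (not_lt.2 ha₁), if_neg (not_lt.2 hb₁), if_pos ha₂, if_pos hb₂]
      exact hH₂ _ (by omega) _ (by omega) (by omega)

theorem sum_blockWave_mul (hr : 3 ≤ r) (he : Even r) (hq : q ^ 2 = 2 * c) (hp : p ^ 2 = c)
    (β γ : Fin 3) :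
    ∑ j ∈ Icc 1 r, blockWave q p r β j * blockWave q p r γ j = if β = γ then c * r else 0 := by
  fin_cases β <;> fin_cases γ <;>
    simp only [blockWave, Fin.reduceFinMk, Matrix.cons_val, mul_mul_mul_comm, ← mul_sum,
      mul_comm (sin _) (cos _), mul_comm (cos _) ((-1 : ℝ) ^ _), mul_comm (sin _) ((-1 : ℝ) ^ _),
      ← sq, mul_pow, pow_right_comm (-1 : ℝ) _ 2, neg_one_sq, one_pow, mul_one, hq, hp,
      sum_cos_sq_eq hr, sum_sin_sq_eq hr, sum_cos_mul_sin_eq_zero hr,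
      sum_neg_one_pow_mul_cos_eq_zero hr he, sum_neg_one_pow_mul_sin_eq_zero hr he, mul_zero,
      sum_const, Nat.card_Icc, add_tsub_cancel_right, nsmul_eq_mul, Fin.reduceEq, ite_true,
      ite_false]
  all_goals ring

theorem eq_coordSign_mul_blockWave {u : ℕ → ℕ → ℕ → ℝ}
    (hu₁ : ∀ i j a, a < m → u i j a = H a i * q * cos (2 * π * j / r))
    (hu₂ : ∀ i j a, m ≤ a → a < 2 * m → u i j a = H (a - m) i * q * sin (2 * π * j / r))
    (hu₃ : ∀ i j, u i j (2 * m) = (-1 : ℝ) ^ j * p) (a : ℕ) (ha : a < 2 * m + 1) (i j : ℕ) :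
    u i j a = coordSign H m a i * blockWave q p r (coordBlock m a) j := by
  unfold coordSign coordBlock
  split_ifs with h₁ h₂
  · simp [blockWave, hu₁ i j a h₁, mul_assoc]
  · simp [blockWave, hu₂ i j a (not_lt.1 h₁) h₂, mul_assoc]
  · obtain rfl : a = 2 * m := by omega
    rw [hu₃, mul_comm]
    simp [blockWave]

theorem sum_sum_coordSign_mul_blockWave {N : ℕ}
    (hH₁ : ∀ k < m, ∀ i < N, H k i = 1 ∨ H k i = -1)
    (hH₂ : ∀ k < m, ∀ k' < m, k ≠ k' → ∑ i ∈ range N, H k i * H k' i = 0)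
    (hr : 3 ≤ r) (he : Even r) (hq : q ^ 2 = 2 * c) (hp : p ^ 2 = c)
    {a b : ℕ} (ha : a < 2 * m + 1) (hb : b < 2 * m + 1) :
    ∑ i ∈ range N, ∑ j ∈ Icc 1 r,
        coordSign H m a i * blockWave q p r (coordBlock m a) j *
          (coordSign H m b i * blockWave q p r (coordBlock m b) j) =
      if a = b then N * (c * r) else 0 := by
  simp_rw [mul_mul_mul_comm _ (blockWave _ _ _ _ _), ← mul_sum, ← sum_mul,
    sum_blockWave_mul hr he hq hp]
  by_cases hab : coordBlock m a = coordBlock m b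
  · rw [sum_coordSign_mul_of_coordBlock_eq hH₁ hH₂ ha hb hab, if_pos hab]
    split_ifs <;> simp
  · have : a ≠ b := fun h => hab (h ▸ rfl)
    simp [hab, this]

theorem sum_sq_blockWave_coordBlock (hq : q ^ 2 = 2 * c) (hp : p ^ 2 = c) (j : ℕ) :
    ∑ a ∈ range (2 * m + 1), blockWave q p r (coordBlock m a) j ^ 2 = (2 * m + 1) * c := by
  rw [sum_range_coordBlock (fun β => blockWave q p r β j ^ 2)]
  simp only [blockWave, Matrix.cons_val, mul_pow, hq, hp, pow_right_comm (-1 : ℝ) _ 2, neg_one_sq,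
    one_pow, mul_one]
  linear_combination (2 * m * c) * cos_sq_add_sin_sq (2 * π * j / r)

end Coordinates

theorem amplitudes_sq_eq {d q p : ℝ} (hd : 0 < d) (hq : q = √(2 / d))
    (hp : p = √(1 - q ^ 2 * (d - 1) / 2)) : q ^ 2 = 2 * d⁻¹ ∧ p ^ 2 = d⁻¹ := by
  have hq2 : q ^ 2 = 2 * d⁻¹ := by rw [hq, sq_sqrt (by positivity), div_eq_mul_inv]
  have hp' : 1 - q ^ 2 * (d - 1) / 2 = d⁻¹ := by
    rw [hq2]
    field_simp
    ring
  exact ⟨hq2, by rw [hp, hp', sq_sqrt (by positivity)]⟩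

theorem hadamard_vectors_resolution_of_identity_general
    (d n r : ℕ) (hd : Odd d)
    (hr4 : 4 ≤ r) (hre : Even r)
    (q p : ℝ) (hq : q = Real.sqrt (2 / d)) (hp : p = Real.sqrt (1 - q ^ 2 * (d - 1) / 2))
    (H' : ℕ → ℕ → ℝ)
    (hH1 : ∀ k < (d - 1) / 2, ∀ i < 2 ^ n, H' k i = 1 ∨ H' k i = -1)
    (hH2 : ∀ k < (d - 1) / 2, ∀ k' < (d - 1) / 2, k ≠ k' →
      ∑ i ∈ range (2 ^ n), H' k i * H' k' i = 0)
    (u : ℕ → ℕ → ℕ → ℝ)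
    (hu1 : ∀ i j a, a < (d - 1) / 2 →
      u i j a = H' a i * q * cos (2 * π * j / r))
    (hu2 : ∀ i j a, (d - 1) / 2 ≤ a → a < d - 1 →
      u i j a = H' (a - (d - 1) / 2) i * q * sin (2 * π * j / r))
    (hu3 : ∀ i j, u i j (d - 1) = (-1 : ℝ) ^ j * p) :
    (∀ i ∈ range (2 ^ n), ∀ j ∈ Icc 1 r,
      ∑ a ∈ range d, (u i j a) ^ 2 = 1) ∧
    (∀ a ∈ range d, ∀ b ∈ range d,
      ∑ i ∈ range (2 ^ n), ∑ j ∈ Icc 1 r, u i j a * u i j b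
        = if a = b then (r * 2 ^ n : ℝ) / d else 0) := by
  obtain ⟨m, rfl⟩ := hd
  simp only [show 2 * m + 1 - 1 = 2 * m by omega, show 2 * m / 2 = m by omega]
    at hH1 hH2 hu1 hu2 hu3
  obtain ⟨hq2, hp2⟩ := amplitudes_sq_eq (by positivity) hq hp
  have hu := eq_coordSign_mul_blockWave (r := r) hu1 hu2 hu3
  refine ⟨fun i hi j _ => ?_, fun a ha b hb => ?_⟩
  · calc ∑ a ∈ range (2 * m + 1), u i j a ^ 2
        = ∑ a ∈ range (2 * m + 1), blockWave q p r (coordBlock m a) j ^ 2 :=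
          sum_congr rfl fun a ha => by
            rw [hu a (mem_range.mp ha), mul_pow, sq_coordSign hH1 a (mem_range.mp hi), one_mul]
      _ = 1 := by
        rw [sum_sq_blockWave_coordBlock hq2 hp2]
        push_cast
        field_simp
  · simp_rw [hu a (mem_range.mp ha), hu b (mem_range.mp hb)]
    rw [sum_sum_coordSign_mul_blockWave hH1 hH2 (by omega) hre hq2 hp2
      (mem_range.mp ha) (mem_range.mp hb), div_eq_mul_inv]
    split_ifs <;> push_cast <;> ring

/-- The Hadamard-sign construction of `r·2ⁿ` unit vectors in `ℝ^d` (for odd `d`,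
`n = ⌈log₂((d-1)/2)⌉`, even `r ≥ 4`, `q = √(2/d)`, `p = √(1 - q²(d-1)/2)`, signs taken
from `(d-1)/2` pairwise orthogonal rows of a `2ⁿ×2ⁿ` Hadamard matrix) yields a resolution
of the identity: the sum of the rank-one projectors equals `(r·2ⁿ/d)·I_d`. -/
theorem hadamard_vectors_resolution_of_identity
    (d n r : ℕ) (hd : Odd d) (hd3 : 3 ≤ d)
    (hn : n = Nat.clog 2 ((d - 1) / 2)) (hr4 : 4 ≤ r) (hre : Even r)
    (q p : ℝ) (hq : q = Real.sqrt (2 / d)) (hp : p = Real.sqrt (1 - q ^ 2 * (d - 1) / 2))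
    (H' : ℕ → ℕ → ℝ)
    (hH1 : ∀ k < (d - 1) / 2, ∀ i < 2 ^ n, H' k i = 1 ∨ H' k i = -1)
    (hH2 : ∀ k < (d - 1) / 2, ∀ k' < (d - 1) / 2, k ≠ k' →
      ∑ i ∈ range (2 ^ n), H' k i * H' k' i = 0)
    (u : ℕ → ℕ → ℕ → ℝ)
    (hu1 : ∀ i j a, a < (d - 1) / 2 →
      u i j a = H' a i * q * cos (2 * π * j / r))
    (hu2 : ∀ i j a, (d - 1) / 2 ≤ a → a < d - 1 →
      u i j a = H' (a - (d - 1) / 2) i * q * sin (2 * π * j / r))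
    (hu3 : ∀ i j, u i j (d - 1) = (-1 : ℝ) ^ j * p) :
    (∀ i ∈ range (2 ^ n), ∀ j ∈ Icc 1 r,
      ∑ a ∈ range d, (u i j a) ^ 2 = 1) ∧
    (∀ a ∈ range d, ∀ b ∈ range d,
      ∑ i ∈ range (2 ^ n), ∑ j ∈ Icc 1 r, u i j a * u i j b
        = if a = b then (r * 2 ^ n : ℝ) / d else 0) :=
  hadamard_vectors_resolution_of_identity_general d n r hd hr4 hre q p hq hp H' hH1 hH2 u hu1 hu2
    hu3
end

section
/- Fix k bases B₁,...,B_k of C^d (each an orthonormal basis of d vectors). Suppose that for every choice of one vector from each basis there is a vector set forming an order (k,k-1) gadget with those k vectors as distinguished vectors (i.e., no {0,1}-coloring of that set assigns 1 to all k distinguished vectors). Then the union of all bases and all gadget sets admits no {0,1}-coloring: assigning exactly one value 1 in each of B₁,...,B_{k-1} forces all d vectors of B_k to be assigned 0, contradicting completeness. -/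
/-! A coloring picks a vector colored 1 in each of the bases `B₁, …, B_k`; these `k` vectors are
the distinguished vectors of one of the gadgets, which forbids exactly that. -/

def IsColoringVec (d : ℕ) (S : Set (EuclideanSpace ℂ (Fin d)))
    (f : EuclideanSpace ℂ (Fin d) → Bool) : Prop :=
  (∀ u ∈ S, ∀ v ∈ S, (inner ℂ u v : ℂ) = 0 → ¬ (f u = true ∧ f v = true)) ∧
  (∀ T : Finset (EuclideanSpace ℂ (Fin d)), ↑T ⊆ S → T.card = d →
    (∀ u ∈ T, ∀ v ∈ T, u ≠ v → (inner ℂ u v : ℂ) = 0) →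
    (T.filter (fun v => f v = true)).card = 1)

theorem IsColoringVec.exists_true_of_orthonormal {d : ℕ} {S : Set (EuclideanSpace ℂ (Fin d))}
    {f : EuclideanSpace ℂ (Fin d) → Bool} (hf : IsColoringVec d S f)
    {ι : Type*} [Fintype ι] {v : ι → EuclideanSpace ℂ (Fin d)} (hv : Orthonormal ℂ v)
    (hcard : Fintype.card ι = d) (hvS : Set.range v ⊆ S) : ∃ i, f (v i) = true := by
  classical
  have hT : (Finset.univ.image v).card = d := by
    rw [Finset.card_image_of_injective _ hv.linearIndependent.injective, Finset.card_univ, hcard]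
  have hone := hf.2 (Finset.univ.image v) (by simpa using hvS) hT (by
    simp only [Finset.mem_image, Finset.mem_univ, true_and]
    rintro _ ⟨i, rfl⟩ _ ⟨j, rfl⟩ hij
    exact hv.2 (ne_of_apply_ne v hij))
  obtain ⟨_, hx⟩ := Finset.card_pos.1 (hone ▸ Nat.one_pos)
  simp only [Finset.mem_filter, Finset.mem_image, Finset.mem_univ, true_and] at hx
  obtain ⟨⟨i, rfl⟩, hi⟩ := hx
  exact ⟨i, hi⟩

theorem ks_set_from_higher_order_gadgets_general
    (d k : ℕ)
    (B : Fin k → Fin d → EuclideanSpace ℂ (Fin d))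
    (hB : ∀ i, Orthonormal ℂ (B i))
    (S : (Fin k → Fin d) → Set (EuclideanSpace ℂ (Fin d)))
    (U : Set (EuclideanSpace ℂ (Fin d)))
    (hU : U = (⋃ c, S c) ∪ ⋃ i, Set.range (B i))
    (hgad : ∀ c : Fin k → Fin d,
      (∀ i, B i (c i) ∈ S c) ∧
      ∀ f, IsColoringVec d U f → ¬ ∀ i, f (B i (c i)) = true) :
    ¬ ∃ f, IsColoringVec d U f := by
  rintro ⟨f, hf⟩
  have hBU : ∀ i, Set.range (B i) ⊆ U := fun i =>
    hU ▸ Set.subset_union_of_subset_right (Set.subset_iUnion (fun i => Set.range (B i)) i) _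
  choose c hc using fun i => hf.exists_true_of_orthonormal (hB i) (Fintype.card_fin d) (hBU i)
  exact (hgad c).2 f hf hc

/-- Construction 1: given `k` orthonormal bases of `ℂ^d` and, for every choice of one
vector from each basis, an order `(k,k-1)` gadget set with those vectors distinguished
(so that no {0,1}-coloring of the combined set assigns 1 to all of them), the union of
all bases and all gadget sets admits no {0,1}-coloring, i.e., it is a Kochen–Specker set. -/
theorem ks_set_from_higher_order_gadgets
    (d k : ℕ) (hd : 0 < d) (hk : 2 ≤ k)
    (B : Fin k → Fin d → EuclideanSpace ℂ (Fin d))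
    (hB : ∀ i, Orthonormal ℂ (B i))
    (S : (Fin k → Fin d) → Set (EuclideanSpace ℂ (Fin d)))
    (U : Set (EuclideanSpace ℂ (Fin d)))
    (hU : U = (⋃ c, S c) ∪ ⋃ i, Set.range (B i))
    (hgad : ∀ c : Fin k → Fin d,
      (∀ i, B i (c i) ∈ S c) ∧
      ∀ f, IsColoringVec d U f → ¬ ∀ i, f (B i (c i)) = true) :
    ¬ ∃ f, IsColoringVec d U f :=
  ks_set_from_higher_order_gadgets_general d k B hB S U hU hgad
end
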